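/- Let p be an odd prime. Then d_− := gcd(S_A(4), 4^p − 1) equals 1. -/

import Mathlib

/-- The quaternary cyclotomic sequence of period 2p from Kim et al.:
`a 0 = 0`, `a p = 2`; for odd `i ≠ p`, value `0`/`1` according to Legendre symbol `(i/p) = ±1`;
for even `i > 0`, value `2`/`3` according to `((i/2)/p) = ±1`. -/
def seqA (p : ℕ) [Fact p.Prime] (i : ℕ) : ℤ :=
  if i = 0 then 0
  else if i = p then 2
  else if i % 2 = 1 then (if legendreSym p i = 1 then 0 else 1)
  else if legendreSym p (i / 2) = 1 then 2 else 3

/-- `S_A(4) = Σ_{i=0}^{2p-1} a(i)·4^i`. -/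
def SA (p : ℕ) [Fact p.Prime] : ℤ := ∑ i ∈ Finset.range (2 * p), seqA p i * 4 ^ i

/-- The Gauss sum `G_p = Σ_{a=1}^{p-1} (a/p)·4^{2a}`. -/
def Gp (p : ℕ) [Fact p.Prime] : ℤ := ∑ a ∈ Finset.Icc 1 (p - 1), legendreSym p a * 4 ^ (2 * a)

/-! If a prime `r` divided both numbers, `4` would be a `p`-th root of unity in `𝔽_r`.
Splitting `S_A` into even and odd indices gives `2 S_A(4) = 9 E - 2 - (1 + χ 2) G` in `𝔽_r`,
where `E = ∑_{j<p} 16^j`, `χ` is the Legendre symbol and `G` the quadratic Gauss sum for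
`ψ a = 4^a`. If `4 = 1` in `𝔽_r`, then `r = 3`, so `9 = 0` and `G = ∑ χ = 0`, leaving
`-2 ≠ 0`. Otherwise `4` has order `p`, so `E = 0`, and `S_A(4) ≡ 0` forces `χ 2 = 1` and
`G = -1`. But `G⁴ = p²`, and `p² ≢ 1 mod r` because `r ≡ 1 mod 2p`. -/

open Finset

theorem Finset.sum_range_two_mul {M : Type*} [AddCommMonoid M] (f : ℕ → M) (n : ℕ) :
    ∑ i ∈ range (2 * n), f i = ∑ j ∈ range n, (f (2 * j) + f (2 * j + 1)) := by
  induction n with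
  | zero => simp
  | succ n ih => rw [mul_add_one, sum_range_succ, sum_range_succ, ih, sum_range_succ, add_assoc]

theorem ZMod.sum_range_natCast {M : Type*} [AddCommMonoid M] (n : ℕ) [NeZero n]
    (f : ZMod n → M) : ∑ j ∈ range n, f j = ∑ x, f x :=
  sum_nbij' (↑) ZMod.val (fun _ _ ↦ mem_univ _) (fun x _ ↦ mem_range.mpr x.val_lt)
    (fun _ hj ↦ ZMod.val_cast_of_lt (mem_range.mp hj)) (fun x _ ↦ ZMod.natCast_zmod_val x)
    (fun _ _ ↦ rfl)

section GaussSum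

variable {F R : Type*} [CommRing F] [Fintype F] [CommRing R]

theorem gaussSum_mulShift_of_isQuadratic {χ : MulChar F R} (hχ : χ.IsQuadratic)
    (ψ : AddChar F R) (a : Fˣ) : gaussSum χ (ψ.mulShift a) = χ a * gaussSum χ ψ := by
  rw [gaussSum_mulShift_eq, hχ.inv]

theorem sum_mul_affine_eq_gaussSum (χ : MulChar F R) (ψ : AddChar F R) (a : Fˣ) (b : F) :
    ∑ x, χ (a * x + b) * ψ (a * x + b) = gaussSum χ ψ :=
  Fintype.sum_bijective _ ((Equiv.addRight b).bijective.comp a.mulLeft_bijective) _ _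
    fun _ ↦ rfl

theorem gaussSum_pow_four {F : Type*} [Field F] [Fintype F] [IsDomain R] {χ : MulChar F R}
    (hχ₁ : χ ≠ 1) (hχ₂ : χ.IsQuadratic) {ψ : AddChar F R} (hψ : ψ.IsPrimitive) :
    gaussSum χ ψ ^ 4 = (Fintype.card F : R) ^ 2 := by
  have hχ : χ (-1) ^ 2 = 1 := by rw [← map_pow, neg_one_sq, map_one]
  rw [show 4 = 2 * 2 by rfl, pow_mul, gaussSum_sq hχ₁ hχ₂ hψ, mul_pow, hχ, one_mul]

end GaussSum

def legendreChar (p : ℕ) [Fact p.Prime] (R : Type*) [CommRing R] : MulChar (ZMod p) R :=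
  (quadraticChar (ZMod p)).ringHomComp (Int.castRingHom R)

section LegendreChar

variable {p : ℕ} [Fact p.Prime] {R : Type*} [CommRing R]

theorem legendreChar_natCast (n : ℕ) : legendreChar p R n = legendreSym p n := by
  simp [legendreChar, legendreSym]

theorem legendreChar_isQuadratic : (legendreChar p R).IsQuadratic :=
  (quadraticChar_isQuadratic _).comp _

theorem legendreChar_ne_one [Nontrivial R] (hp : p ≠ 2) (hR : ringChar R ≠ 2) :
    legendreChar p R ≠ 1 := by
  obtain ⟨a, ha⟩ := quadraticChar_exists_neg_one' (F := ZMod p) (by rwa [ZMod.ringChar_zmod_n])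
  refine MulChar.ne_one_iff.mpr ⟨a, ?_⟩
  simpa [legendreChar, ha] using Ring.neg_one_ne_one_of_char_ne_two hR

end LegendreChar

section Sequence

variable {p : ℕ} [Fact p.Prime]

theorem two_mul_seqA_two_mul (hp : p ≠ 2) {j : ℕ} (hj : j < p) :
    2 * seqA p (2 * j) = 5 - legendreSym p j - if j = 0 then 5 else 0 := by
  obtain rfl | hj0 := eq_or_ne j 0
  · simp [seqA]
  have hp_odd : p % 2 = 1 := Nat.odd_iff.mp ((Fact.out : p.Prime).odd_of_ne_two hp)
  have hjp : ((j : ℤ) : ZMod p) ≠ 0 := by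
    rw [Int.cast_natCast, Ne, ZMod.natCast_eq_zero_iff]
    exact fun h ↦ hj0 (Nat.eq_zero_of_dvd_of_lt h hj)
  have hdiv : ((2 * j : ℕ) : ℤ) / 2 = j := by push_cast; omega
  rw [seqA, if_neg (by omega), if_neg (by omega), if_neg (by omega), hdiv, if_neg hj0]
  rcases legendreSym.eq_one_or_neg_one p hjp with h | h <;> simp [h]

theorem two_mul_seqA_two_mul_add_one {j : ℕ} (hj : j < p) :
    2 * seqA p (2 * j + 1)
      = 1 - legendreSym p (2 * j + 1 : ℕ) + if 2 * j + 1 = p then 3 else 0 := by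
  by_cases hjp : 2 * j + 1 = p
  · have hp0 : legendreSym p (2 * j + 1 : ℕ) = 0 := by
      rw [legendreSym.eq_zero_iff, Int.cast_natCast, hjp, ZMod.natCast_self]
    rw [seqA, if_neg (by omega), if_pos hjp, if_pos hjp, hp0]
    norm_num
  have hj0 : (((2 * j + 1 : ℕ) : ℤ) : ZMod p) ≠ 0 := by
    rw [Int.cast_natCast, Ne, ZMod.natCast_eq_zero_iff]
    rintro ⟨c, hc⟩
    rcases c with _ | _ | c
    · omega
    · omega
    · nlinarith
  rw [seqA, if_neg (by omega), if_neg hjp, if_pos (by omega), if_neg hjp]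
  rcases legendreSym.eq_one_or_neg_one p hj0 with h | h <;> rw [h] <;> norm_num

end Sequence

section CharacterSums

variable {p : ℕ} [Fact p.Prime] {R : Type*} [CommRing R] {ζ : R}

theorem ZMod.isUnit_two (hp : p ≠ 2) : IsUnit (2 : ZMod p) :=
  (Ring.two_ne_zero (by rwa [ZMod.ringChar_zmod_n])).isUnit

theorem sum_legendreSym_mul_pow_two_mul (hp : p ≠ 2) (hζ : ζ ^ p = 1) :
    ∑ j ∈ range p, (legendreSym p j : R) * ζ ^ (2 * j)
      = legendreChar p R 2 * gaussSum (legendreChar p R) (AddChar.zmodChar p hζ) := by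
  set u := (ZMod.isUnit_two hp).unit
  calc ∑ j ∈ range p, (legendreSym p j : R) * ζ ^ (2 * j)
      = ∑ j ∈ range p, legendreChar p R j * (AddChar.zmodChar p hζ).mulShift u j := by
        refine sum_congr rfl fun j _ ↦ ?_
        have h : (u * j : ZMod p) = (2 * j : ℕ) := by simp [u]
        rw [legendreChar_natCast, AddChar.mulShift_apply, h, AddChar.zmodChar_apply']
    _ = gaussSum (legendreChar p R) ((AddChar.zmodChar p hζ).mulShift u) :=
        ZMod.sum_range_natCast p fun x ↦
          legendreChar p R x * (AddChar.zmodChar p hζ).mulShift u x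
    _ = _ := gaussSum_mulShift_of_isQuadratic legendreChar_isQuadratic _ u

theorem sum_legendreSym_mul_pow_two_mul_add_one (hp : p ≠ 2) (hζ : ζ ^ p = 1) :
    ∑ j ∈ range p, (legendreSym p (2 * j + 1 : ℕ) : R) * ζ ^ (2 * j + 1)
      = gaussSum (legendreChar p R) (AddChar.zmodChar p hζ) := by
  set u := (ZMod.isUnit_two hp).unit
  calc ∑ j ∈ range p, (legendreSym p (2 * j + 1 : ℕ) : R) * ζ ^ (2 * j + 1)
      = ∑ j ∈ range p, legendreChar p R (u * j + 1) * AddChar.zmodChar p hζ (u * j + 1) := by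
        refine sum_congr rfl fun j _ ↦ ?_
        have h : (u * j + 1 : ZMod p) = (2 * j + 1 : ℕ) := by simp [u]
        rw [h, legendreChar_natCast, AddChar.zmodChar_apply']
    _ = gaussSum (legendreChar p R) (AddChar.zmodChar p hζ) :=
        (ZMod.sum_range_natCast p fun x ↦
          legendreChar p R (u * x + 1) * AddChar.zmodChar p hζ (u * x + 1)).trans
        (sum_mul_affine_eq_gaussSum _ _ u 1)

end CharacterSums

section KeyIdentity

variable {p : ℕ} [Fact p.Prime] {R : Type*} [CommRing R] {ζ : R}

theorem two_mul_sum_seqA_mul_pow (hp : p ≠ 2) (hζ : ζ ^ p = 1) :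
    2 * ∑ i ∈ range (2 * p), (seqA p i : R) * ζ ^ i
      = (5 + ζ) * ∑ j ∈ range p, (ζ ^ 2) ^ j - 2
        - (1 + legendreChar p R 2) * gaussSum (legendreChar p R) (AddChar.zmodChar p hζ) := by
  have hp_odd : p % 2 = 1 := Nat.odd_iff.mp ((Fact.out : p.Prime).odd_of_ne_two hp)
  have hcorr₀ : ∑ j ∈ range p, (if j = 0 then 5 else 0 : R) * ζ ^ (2 * j) = 5 := by
    simp [(Fact.out : p.Prime).pos]
  have hcorr₁ :
      ∑ j ∈ range p, (if 2 * j + 1 = p then 3 else 0 : R) * ζ ^ (2 * j + 1) = 3 := by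
    rw [sum_eq_single (p / 2) (fun j _ hj ↦ by rw [if_neg (by omega), zero_mul])
      (fun h ↦ absurd (mem_range.mpr (by omega)) h), if_pos (by omega),
      show 2 * (p / 2) + 1 = p by omega, hζ, mul_one]
  calc 2 * ∑ i ∈ range (2 * p), (seqA p i : R) * ζ ^ i
      = ∑ j ∈ range p, (((2 * seqA p (2 * j) : ℤ) : R) * ζ ^ (2 * j)
          + ((2 * seqA p (2 * j + 1) : ℤ) : R) * ζ ^ (2 * j + 1)) := by
        rw [mul_sum, sum_range_two_mul]
        push_cast
        simp only [mul_assoc]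
    _ = ∑ j ∈ range p, ((5 - legendreSym p j : ℤ) * ζ ^ (2 * j)
          + (1 - legendreSym p (2 * j + 1 : ℕ) : ℤ) * ζ ^ (2 * j + 1)) - 5 + 3 := by
        rw [← hcorr₀, ← hcorr₁, sub_eq_add_neg, ← sum_neg_distrib, ← sum_add_distrib,
          ← sum_add_distrib]
        refine sum_congr rfl fun j hj ↦ ?_
        rw [two_mul_seqA_two_mul hp (mem_range.mp hj),
          two_mul_seqA_two_mul_add_one (mem_range.mp hj)]
        push_cast
        ring
    _ = ∑ j ∈ range p, ((5 + ζ) * (ζ ^ 2) ^ j - (legendreSym p j : R) * ζ ^ (2 * j)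
          - (legendreSym p (2 * j + 1 : ℕ) : R) * ζ ^ (2 * j + 1)) - 2 := by
        rw [show ∀ x : R, x - 5 + 3 = x - 2 from fun x ↦ by ring]
        congr 1
        refine sum_congr rfl fun j _ ↦ ?_
        push_cast
        ring
    _ = _ := by
        rw [sum_sub_distrib, sum_sub_distrib, ← mul_sum, sum_legendreSym_mul_pow_two_mul hp hζ,
          sum_legendreSym_mul_pow_two_mul_add_one hp hζ]
        ring

end KeyIdentity

section PrimeModulus

variable {r : ℕ} [Fact r.Prime]

theorem ZMod.two_mul_dvd_sub_one_of_orderOf {n : ℕ} (hn : Odd n) (hr : r ≠ 2) {a : ZMod r}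
    (ha : orderOf a = n) : 2 * n ∣ r - 1 := by
  have ha₀ : a ≠ 0 := by
    rintro rfl
    rw [orderOf_zero] at ha
    exact (ha ▸ Nat.not_odd_zero) hn
  have hr_odd : r % 2 = 1 := Nat.odd_iff.mp ((Fact.out : r.Prime).odd_of_ne_two hr)
  exact Nat.Coprime.mul_dvd_of_dvd_of_dvd (Nat.coprime_two_left.mpr hn) (by omega)
    (ha ▸ ZMod.orderOf_dvd_card_sub_one ha₀)

theorem ZMod.natCast_sq_ne_one {n : ℕ} (hn : 1 < n) (hnr : n + 1 < r) :
    (n : ZMod r) ^ 2 ≠ 1 := by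
  rw [Ne, sq_eq_one_iff, not_or]
  constructor
  · rw [← Nat.cast_one, ZMod.natCast_eq_natCast_iff', Nat.mod_eq_of_lt (by omega),
      Nat.mod_eq_of_lt (by omega)]
    omega
  · rw [eq_neg_iff_add_eq_zero, ← Nat.cast_add_one, ZMod.natCast_eq_zero_iff]
    exact fun h ↦ absurd (Nat.le_of_dvd (by omega) h) (by omega)

theorem gaussSum_legendreChar_pow_four_ne_one {p : ℕ} [Fact p.Prime] (hp : p ≠ 2) (hr : r ≠ 2)
    {ζ : ZMod r} (hζ : IsPrimitiveRoot ζ p) :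
    gaussSum (legendreChar p (ZMod r)) (AddChar.zmodChar p hζ.pow_eq_one) ^ 4 ≠ 1 := by
  have hodd : Odd p := (Fact.out : p.Prime).odd_of_ne_two hp
  rw [gaussSum_pow_four (χ := legendreChar p (ZMod r))
    (legendreChar_ne_one hp (by rwa [ZMod.ringChar_zmod_n])) legendreChar_isQuadratic
    (AddChar.zmodChar_primitive_of_primitive_root p hζ), ZMod.card]
  have hpr : 2 * p ∣ r - 1 := ZMod.two_mul_dvd_sub_one_of_orderOf hodd hr hζ.eq_orderOf.symm
  have := Nat.le_of_dvd (Nat.sub_pos_of_lt (Fact.out : r.Prime).one_lt) hpr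
  have := (Fact.out : p.Prime).two_le
  exact ZMod.natCast_sq_ne_one (Fact.out : p.Prime).one_lt (by omega)

theorem cast_SA_ne_zero {p : ℕ} [Fact p.Prime] (hp : p ≠ 2) (h4 : (4 : ZMod r) ^ p = 1) :
    (SA p : ZMod r) ≠ 0 := by
  intro hSA
  have hkey := two_mul_sum_seqA_mul_pow hp h4
  rw [show ∑ i ∈ range (2 * p), (seqA p i : ZMod r) * 4 ^ i = SA p by push_cast [SA]; rfl,
    hSA, mul_zero] at hkey
  set χ := legendreChar p (ZMod r)
  set G := gaussSum χ (AddChar.zmodChar p h4)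
  have hr : r ≠ 2 := by
    rintro rfl
    rw [show (4 : ZMod 2) = 0 from rfl, zero_pow (Fact.out : p.Prime).ne_zero] at h4
    exact zero_ne_one h4
  have hr' : ringChar (ZMod r) ≠ 2 := by rwa [ZMod.ringChar_zmod_n]
  have h2 : (2 : ZMod r) ≠ 0 := Ring.two_ne_zero hr'
  by_cases h41 : (4 : ZMod r) = 1
  · have hG : G = 0 := by
      simpa [G, gaussSum, AddChar.zmodChar_apply, h41] using
        MulChar.sum_eq_zero_of_ne_one (legendreChar_ne_one hp hr')
    rw [hG, h41] at hkey
    exact h2 (by linear_combination hkey + (2 * ∑ j ∈ range p, ((1 : ZMod r) ^ 2) ^ j) * h41)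
  have hζ : IsPrimitiveRoot (4 : ZMod r) p := orderOf_eq_prime h4 h41 ▸ IsPrimitiveRoot.orderOf 4
  have hE : ∑ j ∈ range p, ((4 : ZMod r) ^ 2) ^ j = 0 :=
    (hζ.pow_of_coprime 2 (Nat.coprime_two_left.mpr ((Fact.out : p.Prime).odd_of_ne_two hp))
      ).geom_sum_eq_zero (Fact.out : p.Prime).one_lt
  rw [hE, mul_zero, zero_sub] at hkey
  obtain hχ | hχ | hχ := legendreChar_isQuadratic (p := p) (R := ZMod r) 2
  · exact ((ZMod.isUnit_two hp).map χ).ne_zero hχ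
  · rw [hχ] at hkey
    have hG : G = -1 := by
      have h : 2 * (G + 1) = 0 := by linear_combination hkey
      linear_combination (mul_eq_zero.mp h).resolve_left h2
    exact gaussSum_legendreChar_pow_four_ne_one hp hr hζ (by change G ^ 4 = 1; rw [hG]; norm_num)
  · rw [hχ] at hkey
    exact h2 (by linear_combination hkey)

end PrimeModulus

/-- `d₋ = gcd(S_A(4), 4^p − 1) = 1`. -/
theorem stmt4 (p : ℕ) [Fact p.Prime] (hodd : Odd p) :
    Int.gcd (SA p) (4 ^ p - 1) = 1 := by
  by_contra hgcd
  obtain ⟨r, hr, hr_dvd⟩ := Nat.exists_prime_and_dvd hgcd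
  have := Fact.mk hr
  have hr_dvd' : (r : ℤ) ∣ Int.gcd (SA p) (4 ^ p - 1) := Int.natCast_dvd_natCast.mpr hr_dvd
  have hSA : (SA p : ZMod r) = 0 :=
    (ZMod.intCast_zmod_eq_zero_iff_dvd _ r).mpr (hr_dvd'.trans (Int.gcd_dvd_left _ _))
  have h4 : (4 : ZMod r) ^ p = 1 := by
    have h := (ZMod.intCast_zmod_eq_zero_iff_dvd _ r).mpr (hr_dvd'.trans (Int.gcd_dvd_right _ _))
    push_cast at h
    exact sub_eq_zero.mp h
  exact cast_SA_ne_zero (by rintro rfl; exact Nat.not_odd_iff_even.mpr even_two hodd) h4 hSA
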